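/- arXiv:1606.03744 — 3 statements merged into one kernel-verified Lean document; each statement's English description precedes it below -/
import Mathlib

section
/- Let φ₀ : ℝ × ℤ × ℤ → Mat(m×m, ℂ) be entrywise differentiable in t and satisfy (φ₀_{,1} − φ₀)_t = (φ₀_{,2} − φ₀)(φ₀_{,1} − φ₀ + I) − (φ₀_{,1} − φ₀ + I)(φ₀_{,2} − φ₀)_{,1,-2}. Let P, Q be constant n×n complex matrices and ω̃ a constant n×n matrix with Q ω̃ = ω̃ P (so that γ₁ := ω̃ P − Q ω̃ = 0 and γ₂ := −ω̃_t = 0). Let θ (m×n) and η (n×m) be entrywise differentiable in t and satisfy (θ_{,1} + θ P)_{,2} = −θ_{,1} − (φ₀_{,1} − φ₀)_{,2} θ_{,1}, θ_t = θ_{,2} + (φ₀_{,2} − φ₀) θ, (η + Q η_{,1})_{,-2} = −η − η (φ₀_{,1} − φ₀), and η_t = −η_{,-2} − η (φ₀_{,2} − φ₀). Let Ω̃ be an invertible n×n matrix function, entrywise differentiable in t, satisfying Ω̃_{,2} − Ω̃ = η θ, (Ω̃ P)_{,2} = Q Ω̃_{,1} − η θ_{,1}, and Ω̃_t = η_{,-2}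 θ. Then φ := φ₀ + θ Ω̃^{-1} η_{,-2} also satisfies (φ_{,1} − φ)_t = (φ_{,2} − φ)(φ_{,1} − φ + I) − (φ_{,1} − φ + I)(φ_{,2} − φ)_{,1,-2} (binary Darboux transformation). -/
/-!
Differentiating `φ = φ₀ + θ Ω̃⁻¹ η_{,-2}` with the product rule and `(Ω̃⁻¹)_t = -Ω̃⁻¹ Ω̃_t Ω̃⁻¹`,
and substituting the evolution equations of `θ`, `η` and `Ω̃`, the defect of the lattice equation
for `φ` becomes an explicit combination of the seed equation, of the lattice equations for `θ`
and `η` at `j₂` and `j₂ - 1`, and of the resolvent identities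
`Ω̃_{,2}⁻¹ - Ω̃⁻¹ = -Ω̃_{,2}⁻¹ η θ Ω̃⁻¹` and `Ω̃_{,2}⁻¹ Q - P Ω̃_{,1}⁻¹ = Ω̃_{,2}⁻¹ η θ_{,1} Ω̃_{,1}⁻¹`
at two sites each; hence it vanishes.
-/

open Matrix

section Calculus

variable {𝕜 : Type*} [NontriviallyNormedField 𝕜]

theorem Matrix.hasDerivAt_iff_entries {m n E : Type*} [Fintype n] [NormedAddCommGroup E]
    [NormedSpace 𝕜 E] {B : 𝕜 → Matrix m n E} {B' : Matrix m n E} {t : 𝕜} :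
    HasDerivAt B B' t ↔ ∀ i j, HasDerivAt (fun s => B s i j) (B' i j) t :=
  (hasDerivAt_pi (φ := fun s => (B s : m → n → E))).trans (forall_congr' fun _ => hasDerivAt_pi)

theorem HasDerivAt.matrix_mul {l m n 𝔸 : Type*} [Fintype m] [Fintype n] [NormedRing 𝔸]
    [NormedAlgebra 𝕜 𝔸] {A : 𝕜 → Matrix l m 𝔸} {B : 𝕜 → Matrix m n 𝔸} {A' : Matrix l m 𝔸}
    {B' : Matrix m n 𝔸} {t : 𝕜} (hA : HasDerivAt A A' t) (hB : HasDerivAt B B' t) :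
    HasDerivAt (fun s => A s * B s) (A' * B t + A t * B') t := by
  rw [Matrix.hasDerivAt_iff_entries] at *
  intro i j
  simp only [mul_apply, Matrix.add_apply, ← Finset.sum_add_distrib]
  exact HasDerivAt.fun_sum fun k _ => (hA i k).mul (hB k j)

variable {𝕂 : Type*} [RCLike 𝕂] [NormedAlgebra 𝕜 𝕂]

section Inverse

-- `HasDerivAt` only sees the topology, so the choice of submultiplicative norm is immaterial.
attribute [local instance] Matrix.linftyOpNormedRing Matrix.linftyOpNormedAlgebra

theorem HasDerivAt.matrix_inv {n : Type*} [Fintype n] [DecidableEq n] {A : 𝕜 → Matrix n n 𝕂}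
    {A' : Matrix n n 𝕂} {t : 𝕜} (hA : HasDerivAt A A' t) (hAt : IsUnit (A t)) :
    HasDerivAt (fun s => (A s)⁻¹) (-((A t)⁻¹ * A' * (A t)⁻¹)) t := by
  obtain ⟨u, hu⟩ := hAt
  simp only [nonsing_inv_eq_ringInverse, ← hu, Ring.inverse_unit]
  exact (hasFDerivAt_ringInverse (𝕜 := 𝕜) u).comp_hasDerivAt_of_eq t hA hu

end Inverse

theorem HasDerivAt.matrix_mul_inv_mul {l n p : Type*} [Fintype l] [Fintype n] [DecidableEq n]
    [Fintype p] {A : 𝕜 → Matrix l n 𝕂} {B : 𝕜 → Matrix n n 𝕂} {C : 𝕜 → Matrix n p 𝕂}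
    {A' : Matrix l n 𝕂} {B' : Matrix n n 𝕂} {C' : Matrix n p 𝕂} {t : 𝕜}
    (hA : HasDerivAt A A' t) (hB : HasDerivAt B B' t) (hC : HasDerivAt C C' t)
    (hBt : IsUnit (B t)) :
    HasDerivAt (fun s => A s * (B s)⁻¹ * C s)
      (A' * (B t)⁻¹ * C t - A t * (B t)⁻¹ * B' * (B t)⁻¹ * C t + A t * (B t)⁻¹ * C') t := by
  convert (hA.matrix_mul (hB.matrix_inv hBt)).matrix_mul hC using 1
  simp only [Matrix.add_mul, Matrix.mul_neg, Matrix.neg_mul, Matrix.mul_assoc]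
  abel

end Calculus

theorem Matrix.inv_mul_sub_mul_inv {n p R : Type*} [Fintype n] [DecidableEq n] [Fintype p]
    [DecidableEq p] [CommRing R] {A : Matrix n n R} {B : Matrix p p R} (hA : IsUnit A)
    (hB : IsUnit B) (X Y : Matrix n p R) :
    A⁻¹ * X - Y * B⁻¹ = A⁻¹ * (X * B - A * Y) * B⁻¹ := by
  rw [Matrix.mul_sub, Matrix.sub_mul, Matrix.mul_assoc, Matrix.mul_assoc,
    mul_nonsing_inv _ ((isUnit_iff_isUnit_det B).mp hB), Matrix.mul_one, ← Matrix.mul_assoc,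
    nonsing_inv_mul _ ((isUnit_iff_isUnit_det A).mp hA), Matrix.one_mul]

def miuraDualRHS {m R : Type*} [Fintype m] [DecidableEq m] [Ring R]
    (φ : ℤ → ℤ → Matrix m m R) (j₁ j₂ : ℤ) : Matrix m m R :=
  (φ j₁ (j₂ + 1) - φ j₁ j₂) * (φ (j₁ + 1) j₂ - φ j₁ j₂ + 1)
    - (φ (j₁ + 1) j₂ - φ j₁ j₂ + 1) * (φ (j₁ + 1) j₂ - φ (j₁ + 1) (j₂ - 1))

section Lattice

variable {m n R : Type*} [Fintype m] [DecidableEq m] [Fintype n] [DecidableEq n] [CommRing R]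

theorem binaryDarboux_deriv_sub_eq_miuraDualRHS
    (φ₀ φ₀t : ℤ → ℤ → Matrix m m R)
    (hseed : ∀ j₁ j₂, φ₀t (j₁ + 1) j₂ - φ₀t j₁ j₂ = miuraDualRHS φ₀ j₁ j₂)
    (P Q : Matrix n n R)
    (θ θt : ℤ → ℤ → Matrix m n R)
    (hθ1 : ∀ j₁ j₂, θ (j₁ + 1) (j₂ + 1) + θ j₁ (j₂ + 1) * P
      = -θ (j₁ + 1) j₂ - (φ₀ (j₁ + 1) (j₂ + 1) - φ₀ j₁ (j₂ + 1)) * θ (j₁ + 1) j₂)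
    (hθ2 : ∀ j₁ j₂, θt j₁ j₂ = θ j₁ (j₂ + 1) + (φ₀ j₁ (j₂ + 1) - φ₀ j₁ j₂) * θ j₁ j₂)
    (η ηt : ℤ → ℤ → Matrix n m R)
    (hη1 : ∀ j₁ j₂, η j₁ (j₂ - 1) + Q * η (j₁ + 1) (j₂ - 1)
      = -η j₁ j₂ - η j₁ j₂ * (φ₀ (j₁ + 1) j₂ - φ₀ j₁ j₂))
    (hη2 : ∀ j₁ j₂, ηt j₁ j₂ = -η j₁ (j₂ - 1) - η j₁ j₂ * (φ₀ j₁ (j₂ + 1) - φ₀ j₁ j₂))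
    (Om Omt : ℤ → ℤ → Matrix n n R)
    (hOminv : ∀ j₁ j₂, IsUnit (Om j₁ j₂))
    (hOm1 : ∀ j₁ j₂, Om j₁ (j₂ + 1) - Om j₁ j₂ = η j₁ j₂ * θ j₁ j₂)
    (hOm2 : ∀ j₁ j₂, Om j₁ (j₂ + 1) * P = Q * Om (j₁ + 1) j₂ - η j₁ j₂ * θ (j₁ + 1) j₂)
    (hOm3 : ∀ j₁ j₂, Omt j₁ j₂ = η j₁ (j₂ - 1) * θ j₁ j₂)
    (φ φt : ℤ → ℤ → Matrix m m R)
    (hφ : ∀ j₁ j₂, φ j₁ j₂ = φ₀ j₁ j₂ + θ j₁ j₂ * (Om j₁ j₂)⁻¹ * η j₁ (j₂ - 1))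
    (hφt : ∀ j₁ j₂, φt j₁ j₂ = φ₀t j₁ j₂ + (θt j₁ j₂ * (Om j₁ j₂)⁻¹ * η j₁ (j₂ - 1)
      - θ j₁ j₂ * (Om j₁ j₂)⁻¹ * Omt j₁ j₂ * (Om j₁ j₂)⁻¹ * η j₁ (j₂ - 1)
      + θ j₁ j₂ * (Om j₁ j₂)⁻¹ * ηt j₁ (j₂ - 1)))
    (j₁ j₂ : ℤ) :
    φt (j₁ + 1) j₂ - φt j₁ j₂ = miuraDualRHS φ j₁ j₂ := by
  simp only [miuraDualRHS] at hseed ⊢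
  have hres₁ (a b : ℤ) : (Om a (b + 1))⁻¹ - (Om a b)⁻¹
      = -((Om a (b + 1))⁻¹ * (η a b * θ a b) * (Om a b)⁻¹) := by
    rw [Matrix.inv_sub_inv (iff_of_true (hOminv a (b + 1)) (hOminv a b)), ← neg_sub, hOm1,
      Matrix.mul_neg, Matrix.neg_mul]
  have hres₂ (a b : ℤ) : (Om a (b + 1))⁻¹ * Q - P * (Om (a + 1) b)⁻¹
      = (Om a (b + 1))⁻¹ * (η a b * θ (a + 1) b) * (Om (a + 1) b)⁻¹ := by
    rw [Matrix.inv_mul_sub_mul_inv (hOminv a (b + 1)) (hOminv (a + 1) b), hOm2, sub_sub_cancel]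
  have hθ1' := hθ1 j₁ (j₂ - 1)
  have hres₁' := hres₁ (j₁ + 1) (j₂ - 1)
  have hres₂' := hres₂ j₁ (j₂ - 1)
  simp only [sub_add_cancel] at hθ1' hres₁' hres₂'
  simp only [hφt, hφ, hθ2, hOm3, hη2, sub_add_cancel, add_sub_cancel_right]
  linear_combination (norm := skip) hseed j₁ j₂
    + congr($(hθ1 j₁ j₂) * ((Om (j₁ + 1) j₂)⁻¹ * η (j₁ + 1) (j₂ - 1)))
    - congr($hθ1' * ((Om (j₁ + 1) (j₂ - 1))⁻¹ * η (j₁ + 1) (j₂ - 1 - 1)))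
    - congr(θ j₁ (j₂ + 1) * (Om j₁ (j₂ + 1))⁻¹ * $(hη1 j₁ j₂))
    + congr(θ j₁ j₂ * (Om j₁ j₂)⁻¹ * $(hη1 j₁ (j₂ - 1)))
    + congr(θ j₁ (j₂ + 1) * $(hres₁ j₁ j₂) * η j₁ (j₂ - 1))
    - congr(θ (j₁ + 1) j₂ * $hres₁' * η (j₁ + 1) (j₂ - 1 - 1))
    + congr(θ j₁ (j₂ + 1) * $(hres₂ j₁ j₂) * η (j₁ + 1) (j₂ - 1))
    - congr(θ j₁ j₂ * $hres₂' * η (j₁ + 1) (j₂ - 1 - 1))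
  simp only [Matrix.mul_add, Matrix.add_mul, Matrix.mul_sub, Matrix.sub_mul, Matrix.neg_mul,
    Matrix.mul_neg, Matrix.mul_assoc, Matrix.mul_one, Matrix.one_mul]
  abel

end Lattice

theorem stmt_17_general (m n : ℕ)
    (φ₀ φ₀t : ℝ → ℤ → ℤ → Matrix (Fin m) (Fin m) ℂ)
    (hφ₀t : ∀ t j₁ j₂ (a b : Fin m),
      HasDerivAt (fun s => φ₀ s j₁ j₂ a b) (φ₀t t j₁ j₂ a b) t)
    (hseed : ∀ t j₁ j₂,
      φ₀t t (j₁ + 1) j₂ - φ₀t t j₁ j₂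
        = (φ₀ t j₁ (j₂ + 1) - φ₀ t j₁ j₂) * (φ₀ t (j₁ + 1) j₂ - φ₀ t j₁ j₂ + 1)
          - (φ₀ t (j₁ + 1) j₂ - φ₀ t j₁ j₂ + 1)
            * (φ₀ t (j₁ + 1) j₂ - φ₀ t (j₁ + 1) (j₂ - 1)))
    (P Q : Matrix (Fin n) (Fin n) ℂ)
    (θ θt : ℝ → ℤ → ℤ → Matrix (Fin m) (Fin n) ℂ)
    (hθt : ∀ t j₁ j₂ (a : Fin m) (b : Fin n),
      HasDerivAt (fun s => θ s j₁ j₂ a b) (θt t j₁ j₂ a b) t)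
    (hθ1 : ∀ t j₁ j₂, θ t (j₁ + 1) (j₂ + 1) + θ t j₁ (j₂ + 1) * P
      = -θ t (j₁ + 1) j₂ - (φ₀ t (j₁ + 1) (j₂ + 1) - φ₀ t j₁ (j₂ + 1)) * θ t (j₁ + 1) j₂)
    (hθ2 : ∀ t j₁ j₂, θt t j₁ j₂
      = θ t j₁ (j₂ + 1) + (φ₀ t j₁ (j₂ + 1) - φ₀ t j₁ j₂) * θ t j₁ j₂)
    (η ηt : ℝ → ℤ → ℤ → Matrix (Fin n) (Fin m) ℂ)
    (hηt : ∀ t j₁ j₂ (a : Fin n) (b : Fin m),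
      HasDerivAt (fun s => η s j₁ j₂ a b) (ηt t j₁ j₂ a b) t)
    (hη1 : ∀ t j₁ j₂, η t j₁ (j₂ - 1) + Q * η t (j₁ + 1) (j₂ - 1)
      = -η t j₁ j₂ - η t j₁ j₂ * (φ₀ t (j₁ + 1) j₂ - φ₀ t j₁ j₂))
    (hη2 : ∀ t j₁ j₂, ηt t j₁ j₂
      = -η t j₁ (j₂ - 1) - η t j₁ j₂ * (φ₀ t j₁ (j₂ + 1) - φ₀ t j₁ j₂))
    (Om Omt : ℝ → ℤ → ℤ → Matrix (Fin n) (Fin n) ℂ)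
    (hOminv : ∀ t j₁ j₂, IsUnit (Om t j₁ j₂))
    (hOmt : ∀ t j₁ j₂ (a b : Fin n),
      HasDerivAt (fun s => Om s j₁ j₂ a b) (Omt t j₁ j₂ a b) t)
    (hOm1 : ∀ t j₁ j₂, Om t j₁ (j₂ + 1) - Om t j₁ j₂ = η t j₁ j₂ * θ t j₁ j₂)
    (hOm2 : ∀ t j₁ j₂, Om t j₁ (j₂ + 1) * P
      = Q * Om t (j₁ + 1) j₂ - η t j₁ j₂ * θ t (j₁ + 1) j₂)
    (hOm3 : ∀ t j₁ j₂, Omt t j₁ j₂ = η t j₁ (j₂ - 1) * θ t j₁ j₂)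
    (φ : ℝ → ℤ → ℤ → Matrix (Fin m) (Fin m) ℂ)
    (hφ : ∀ t j₁ j₂, φ t j₁ j₂
      = φ₀ t j₁ j₂ + θ t j₁ j₂ * (Om t j₁ j₂)⁻¹ * η t j₁ (j₂ - 1)) :
    ∀ t j₁ j₂ (a b : Fin m),
      HasDerivAt (fun s => (φ s (j₁ + 1) j₂ - φ s j₁ j₂) a b)
        (((φ t j₁ (j₂ + 1) - φ t j₁ j₂) * (φ t (j₁ + 1) j₂ - φ t j₁ j₂ + 1)
          - (φ t (j₁ + 1) j₂ - φ t j₁ j₂ + 1)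
            * (φ t (j₁ + 1) j₂ - φ t (j₁ + 1) (j₂ - 1)) : Matrix (Fin m) (Fin m) ℂ) a b) t := by
  intro t j₁ j₂ a b
  obtain ⟨φt, hφt⟩ : ∃ φt : ℤ → ℤ → Matrix (Fin m) (Fin m) ℂ, ∀ x y, φt x y = φ₀t t x y
      + (θt t x y * (Om t x y)⁻¹ * η t x (y - 1)
        - θ t x y * (Om t x y)⁻¹ * Omt t x y * (Om t x y)⁻¹ * η t x (y - 1)
        + θ t x y * (Om t x y)⁻¹ * ηt t x (y - 1)) :=
    ⟨_, fun _ _ => rfl⟩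
  have hderiv (x y : ℤ) (a b : Fin m) :
      HasDerivAt (fun s => φ s x y a b) (φt x y a b) t := by
    simp only [hφ, hφt, Matrix.add_apply]
    exact (hφ₀t t x y a b).add (hasDerivAt_iff_entries.1
      ((hasDerivAt_iff_entries.2 (hθt t x y)).matrix_mul_inv_mul
        (hasDerivAt_iff_entries.2 (hOmt t x y)) (hasDerivAt_iff_entries.2 (hηt t x (y - 1)))
        (hOminv t x y)) a b)
  have hlattice := binaryDarboux_deriv_sub_eq_miuraDualRHS (φ₀ t) (φ₀t t) (hseed t) P Q
    (θ t) (θt t) (hθ1 t) (hθ2 t) (η t) (ηt t) (hη1 t) (hη2 t) (Om t) (Omt t) (hOminv t)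
    (hOm1 t) (hOm2 t) (hOm3 t) (φ t) φt (hφ t) hφt j₁ j₂
  have h : HasDerivAt (fun s => (φ s (j₁ + 1) j₂ - φ s j₁ j₂) a b)
      ((φt (j₁ + 1) j₂ - φt j₁ j₂) a b) t :=
    (hderiv (j₁ + 1) j₂ a b).sub (hderiv j₁ j₂ a b)
  rwa [hlattice] at h

/-- binary Darboux transformation for the Miura-dual equation.  With constant
`P, Q, ω̃ (= om)` satisfying `Q ω̃ = ω̃ P` (so `γ₁ = γ₂ = 0`), and `θ, η, Ω̃ (= Om)` solving the
corresponding linear equations, `φ = φ₀ + θ Ω̃⁻¹ η_{,-2}` again satisfies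
`(φ_{,1} − φ)_t = (φ_{,2} − φ)(φ_{,1} − φ + I) − (φ_{,1} − φ + I)(φ_{,2} − φ)_{,1,-2}`. -/
theorem stmt_17 (m n : ℕ)
    (φ₀ φ₀t : ℝ → ℤ → ℤ → Matrix (Fin m) (Fin m) ℂ)
    (hφ₀t : ∀ t j₁ j₂ (a b : Fin m),
      HasDerivAt (fun s => φ₀ s j₁ j₂ a b) (φ₀t t j₁ j₂ a b) t)
    (hseed : ∀ t j₁ j₂,
      φ₀t t (j₁ + 1) j₂ - φ₀t t j₁ j₂
        = (φ₀ t j₁ (j₂ + 1) - φ₀ t j₁ j₂) * (φ₀ t (j₁ + 1) j₂ - φ₀ t j₁ j₂ + 1)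
          - (φ₀ t (j₁ + 1) j₂ - φ₀ t j₁ j₂ + 1)
            * (φ₀ t (j₁ + 1) j₂ - φ₀ t (j₁ + 1) (j₂ - 1)))
    (P Q om : Matrix (Fin n) (Fin n) ℂ)
    (hom : Q * om = om * P)
    (θ θt : ℝ → ℤ → ℤ → Matrix (Fin m) (Fin n) ℂ)
    (hθt : ∀ t j₁ j₂ (a : Fin m) (b : Fin n),
      HasDerivAt (fun s => θ s j₁ j₂ a b) (θt t j₁ j₂ a b) t)
    (hθ1 : ∀ t j₁ j₂, θ t (j₁ + 1) (j₂ + 1) + θ t j₁ (j₂ + 1) * P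
      = -θ t (j₁ + 1) j₂ - (φ₀ t (j₁ + 1) (j₂ + 1) - φ₀ t j₁ (j₂ + 1)) * θ t (j₁ + 1) j₂)
    (hθ2 : ∀ t j₁ j₂, θt t j₁ j₂
      = θ t j₁ (j₂ + 1) + (φ₀ t j₁ (j₂ + 1) - φ₀ t j₁ j₂) * θ t j₁ j₂)
    (η ηt : ℝ → ℤ → ℤ → Matrix (Fin n) (Fin m) ℂ)
    (hηt : ∀ t j₁ j₂ (a : Fin n) (b : Fin m),
      HasDerivAt (fun s => η s j₁ j₂ a b) (ηt t j₁ j₂ a b) t)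
    (hη1 : ∀ t j₁ j₂, η t j₁ (j₂ - 1) + Q * η t (j₁ + 1) (j₂ - 1)
      = -η t j₁ j₂ - η t j₁ j₂ * (φ₀ t (j₁ + 1) j₂ - φ₀ t j₁ j₂))
    (hη2 : ∀ t j₁ j₂, ηt t j₁ j₂
      = -η t j₁ (j₂ - 1) - η t j₁ j₂ * (φ₀ t j₁ (j₂ + 1) - φ₀ t j₁ j₂))
    (Om Omt : ℝ → ℤ → ℤ → Matrix (Fin n) (Fin n) ℂ)
    (hOminv : ∀ t j₁ j₂, IsUnit (Om t j₁ j₂))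
    (hOmt : ∀ t j₁ j₂ (a b : Fin n),
      HasDerivAt (fun s => Om s j₁ j₂ a b) (Omt t j₁ j₂ a b) t)
    (hOm1 : ∀ t j₁ j₂, Om t j₁ (j₂ + 1) - Om t j₁ j₂ = η t j₁ j₂ * θ t j₁ j₂)
    (hOm2 : ∀ t j₁ j₂, Om t j₁ (j₂ + 1) * P
      = Q * Om t (j₁ + 1) j₂ - η t j₁ j₂ * θ t (j₁ + 1) j₂)
    (hOm3 : ∀ t j₁ j₂, Omt t j₁ j₂ = η t j₁ (j₂ - 1) * θ t j₁ j₂)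
    (φ : ℝ → ℤ → ℤ → Matrix (Fin m) (Fin m) ℂ)
    (hφ : ∀ t j₁ j₂, φ t j₁ j₂
      = φ₀ t j₁ j₂ + θ t j₁ j₂ * (Om t j₁ j₂)⁻¹ * η t j₁ (j₂ - 1)) :
    ∀ t j₁ j₂ (a b : Fin m),
      HasDerivAt (fun s => (φ s (j₁ + 1) j₂ - φ s j₁ j₂) a b)
        (((φ t j₁ (j₂ + 1) - φ t j₁ j₂) * (φ t (j₁ + 1) j₂ - φ t j₁ j₂ + 1)
          - (φ t (j₁ + 1) j₂ - φ t j₁ j₂ + 1)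
            * (φ t (j₁ + 1) j₂ - φ t (j₁ + 1) (j₂ - 1)) : Matrix (Fin m) (Fin m) ℂ) a b) t :=
  stmt_17_general m n φ₀ φ₀t hφ₀t hseed P Q θ θt hθt hθ1 hθ2 η ηt hηt hη1 hη2 Om Omt hOminv hOmt
    hOm1 hOm2 hOm3 φ hφ
end

section
/- Let φ : ℝ × ℤ × ℤ → Mat(m×m, ℂ), q̃ (m×n) and r̃ (n×m) be matrix functions, entrywise differentiable in t, let P, Q be constant n×n complex matrices, and let γ₂ be an n×n matrix function satisfying γ₂_{,2} = γ₂ and Q γ₂_{,1} = γ₂ P. Suppose (φ_{,1} − φ)_t + (φ_{,1} − φ + I)(φ_{,2} − φ)_{,1,-2} − (φ_{,2} − φ)(φ_{,1} − φ + I) = (q̃ γ₂ r̃_{,-2})_{,1} − q̃ γ₂ r̃_{,-2}, q̃_{,1,2} = −(φ_{,1} − φ + I)_{,2} q̃_{,1} − q̃_{,2} Q, and r̃_{,-2} = −r̃ (φ_{,1} − φ + I) − P r̃_{,1,-2} (the source-extended system with γ₁ = 0). Then q̂ := q̃ γ₂ together with φ and r̃ satisfies the self-consistent source extension: (φ_{,1}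 − φ)_t + (φ_{,1} − φ + I)(φ_{,2} − φ)_{,1,-2} − (φ_{,2} − φ)(φ_{,1} − φ + I) = (q̂ r̃_{,-2})_{,1} − q̂ r̃_{,-2}, q̂_{,1,2} = −(φ_{,1} − φ + I)_{,2} q̂_{,1} − q̂_{,2} P, and r̃_{,-2} = −r̃ (φ_{,1} − φ + I) − P r̃_{,1,-2}. -/
open Matrix

/-- absorbing `γ₂` into the source for the Miura-dual equation.  If
`(φ, q̃ (= qq), r̃ (= rr))` solves the source-extended system with `γ₁ = 0`, then
`(φ, q̂ := q̃ γ₂, r̃)` solves the self-consistent source extension. -/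
theorem stmt_18 (m n : ℕ)
    (φ φt : ℝ → ℤ → ℤ → Matrix (Fin m) (Fin m) ℂ)
    (hφt : ∀ t j₁ j₂ (a b : Fin m),
      HasDerivAt (fun s => φ s j₁ j₂ a b) (φt t j₁ j₂ a b) t)
    (qq : ℝ → ℤ → ℤ → Matrix (Fin m) (Fin n) ℂ)
    (rr : ℝ → ℤ → ℤ → Matrix (Fin n) (Fin m) ℂ)
    (hqdiff : ∀ t j₁ j₂ (a : Fin m) (b : Fin n), DifferentiableAt ℝ (fun s => qq s j₁ j₂ a b) t)
    (hrdiff : ∀ t j₁ j₂ (a : Fin n) (b : Fin m), DifferentiableAt ℝ (fun s => rr s j₁ j₂ a b) t)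
    (P Q : Matrix (Fin n) (Fin n) ℂ)
    (γ₂ : ℝ → ℤ → ℤ → Matrix (Fin n) (Fin n) ℂ)
    (hγ₂2 : ∀ t j₁ j₂, γ₂ t j₁ (j₂ + 1) = γ₂ t j₁ j₂)
    (hQγ₂ : ∀ t j₁ j₂, Q * γ₂ t (j₁ + 1) j₂ = γ₂ t j₁ j₂ * P)
    -- (φ_{,1} − φ)_t + (φ_{,1} − φ + I)(φ_{,2} − φ)_{,1,-2} − (φ_{,2} − φ)(φ_{,1} − φ + I)
    --   = (q̃ γ₂ r̃_{,-2})_{,1} − q̃ γ₂ r̃_{,-2}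
    (heq1 : ∀ t j₁ j₂,
      φt t (j₁ + 1) j₂ - φt t j₁ j₂
        + (φ t (j₁ + 1) j₂ - φ t j₁ j₂ + 1) * (φ t (j₁ + 1) j₂ - φ t (j₁ + 1) (j₂ - 1))
        - (φ t j₁ (j₂ + 1) - φ t j₁ j₂) * (φ t (j₁ + 1) j₂ - φ t j₁ j₂ + 1)
      = qq t (j₁ + 1) j₂ * γ₂ t (j₁ + 1) j₂ * rr t (j₁ + 1) (j₂ - 1)
        - qq t j₁ j₂ * γ₂ t j₁ j₂ * rr t j₁ (j₂ - 1))
    -- q̃_{,1,2} = −(φ_{,1} − φ + I)_{,2} q̃_{,1} − q̃_{,2} Q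
    (heq2 : ∀ t j₁ j₂, qq t (j₁ + 1) (j₂ + 1)
      = -((φ t (j₁ + 1) (j₂ + 1) - φ t j₁ (j₂ + 1) + 1) * qq t (j₁ + 1) j₂)
        - qq t j₁ (j₂ + 1) * Q)
    -- r̃_{,-2} = −r̃ (φ_{,1} − φ + I) − P r̃_{,1,-2}
    (heq3 : ∀ t j₁ j₂, rr t j₁ (j₂ - 1)
      = -(rr t j₁ j₂ * (φ t (j₁ + 1) j₂ - φ t j₁ j₂ + 1)) - P * rr t (j₁ + 1) (j₂ - 1)) :
    -- conclusions for q̂ := q̃ γ₂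
    (∀ t j₁ j₂,
      φt t (j₁ + 1) j₂ - φt t j₁ j₂
        + (φ t (j₁ + 1) j₂ - φ t j₁ j₂ + 1) * (φ t (j₁ + 1) j₂ - φ t (j₁ + 1) (j₂ - 1))
        - (φ t j₁ (j₂ + 1) - φ t j₁ j₂) * (φ t (j₁ + 1) j₂ - φ t j₁ j₂ + 1)
      = (qq t (j₁ + 1) j₂ * γ₂ t (j₁ + 1) j₂) * rr t (j₁ + 1) (j₂ - 1)
        - (qq t j₁ j₂ * γ₂ t j₁ j₂) * rr t j₁ (j₂ - 1)) ∧
    -- q̂_{,1,2} = −(φ_{,1} − φ + I)_{,2} q̂_{,1} − q̂_{,2} P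
    (∀ t j₁ j₂, qq t (j₁ + 1) (j₂ + 1) * γ₂ t (j₁ + 1) (j₂ + 1)
      = -((φ t (j₁ + 1) (j₂ + 1) - φ t j₁ (j₂ + 1) + 1)
          * (qq t (j₁ + 1) j₂ * γ₂ t (j₁ + 1) j₂))
        - (qq t j₁ (j₂ + 1) * γ₂ t j₁ (j₂ + 1)) * P) ∧
    -- r̃_{,-2} = −r̃ (φ_{,1} − φ + I) − P r̃_{,1,-2}
    (∀ t j₁ j₂, rr t j₁ (j₂ - 1)
      = -(rr t j₁ j₂ * (φ t (j₁ + 1) j₂ - φ t j₁ j₂ + 1)) - P * rr t (j₁ + 1) (j₂ - 1)) := by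
  refine ⟨fun t j₁ j₂ => heq1 t j₁ j₂, fun t j₁ j₂ => ?_, heq3⟩
  rw [heq2, hγ₂2, hγ₂2, Matrix.sub_mul, Matrix.neg_mul, Matrix.mul_assoc, Matrix.mul_assoc, hQγ₂, ← Matrix.mul_assoc (qq t j₁ (j₂ + 1))]
end

section
/- Let k ≥ 1 and l ≥ 1 be integers, let g : ℝ × ℤ → Mat(m×m, ℂ) be invertible and entrywise differentiable in t, let q̂ (m×n) and r̃ (n×m) be matrix functions, and let P be a constant n×n complex matrix. Suppose (g g_{(k)}^{-1})_t + (g g_{(l)}^{-1})_{(k−l)} − g g_{(l)}^{-1} = (q̂_{(−l)} r̃)_{(l)} − (q̂_{(−l)} r̃)_{(k)}, q̂_{(k−l)} + q̂ P + g g_{(k)}^{-1} q̂_{(k)} = 0, and r̃_{(l−k)} + P r̃ + (r̃ g)_{(−k)} g^{-1} = 0. Then V := g g_{(1)}^{-1} together with q̂ and r̃ satisfies the self-consistent source extension of the generalized Volterra lattice equation: (V V_{(1)} ⋯ V_{(k−1)})_t − (V V_{(1)} ⋯ V_{(l−1)} − V_{(k−l)} V_{(k−l+1)} ⋯ V_{(k−1)})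 = q̂ r̃_{(l)} − (q̂ r̃_{(l)})_{(k−l)}, q̂_{(k−l)} + q̂ P = −V V_{(1)} ⋯ V_{(k−1)} q̂_{(k)}, and r̃_{(l)} + P r̃_{(k)} = −r̃ V V_{(1)} ⋯ V_{(k−1)}. -/
open Matrix

/-- Ordered product `V_(a) V_(a+1) ⋯ V_(a+n-1)` of an `ℤ`-indexed family of matrices,
with indices increasing from left to right (the empty product is the identity matrix). -/
noncomputable def ordProd {m : ℕ} (V : ℤ → Matrix (Fin m) (Fin m) ℂ) (a : ℤ) (n : ℕ) :
    Matrix (Fin m) (Fin m) ℂ :=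
  ((List.range n).map fun i => V (a + (i : ℤ))).prod

lemma ordProd_telescope {m : ℕ} (g : ℤ → Matrix (Fin m) (Fin m) ℂ)
    (hg : ∀ j, IsUnit (g j)) (a : ℤ) (n : ℕ) :
    ordProd (fun i => g i * (g (i + 1))⁻¹) a n = g a * (g (a + n))⁻¹ := by
  induction n with
  | zero =>
    simp [ordProd, Matrix.mul_nonsing_inv _ ((Matrix.isUnit_iff_isUnit_det _).1 (hg a))]
  | succ n ih =>
    have hstep : ordProd (fun i => g i * (g (i + 1))⁻¹) a (n + 1)
        = ordProd (fun i => g i * (g (i + 1))⁻¹) a n * (g (a + n) * (g (a + n + 1))⁻¹) := by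
      simp [ordProd, List.range_succ]
    rw [hstep, ih, mul_assoc, ← mul_assoc ((g (a + n))⁻¹),
      Matrix.nonsing_inv_mul _ ((Matrix.isUnit_iff_isUnit_det _).1 (hg (a + n))),
      one_mul, show a + (n : ℤ) + 1 = a + ((n + 1 : ℕ) : ℤ) by push_cast; ring]

/-- if `(g, q̂ (= qh), r̃ (= rr))` solves the source-extended reduced system
`(g g_{(k)}⁻¹)_t + (g g_{(l)}⁻¹)_{(k−l)} − g g_{(l)}⁻¹ = (q̂_{(−l)} r̃)_{(l)} − (q̂_{(−l)} r̃)_{(k)}`,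
`q̂_{(k−l)} + q̂ P + g g_{(k)}⁻¹ q̂_{(k)} = 0`, `r̃_{(l−k)} + P r̃ + (r̃ g)_{(−k)} g⁻¹ = 0`
(with `k ≥ 1`, `l ≥ 1`), then `V := g g_{(1)}⁻¹` together with `q̂, r̃` satisfies the
self-consistent source extension of the generalized Volterra lattice equation. -/
theorem stmt_19 (m n : ℕ) (k l : ℤ) (hk : 1 ≤ k) (hl : 1 ≤ l)
    (g : ℝ → ℤ → Matrix (Fin m) (Fin m) ℂ)
    (hginv : ∀ t j, IsUnit (g t j))
    (hgdiff : ∀ t j (a b : Fin m), DifferentiableAt ℝ (fun s => g s j a b) t)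
    (qh : ℝ → ℤ → Matrix (Fin m) (Fin n) ℂ)
    (rr : ℝ → ℤ → Matrix (Fin n) (Fin m) ℂ)
    (P : Matrix (Fin n) (Fin n) ℂ)
    -- (g g_{(k)}⁻¹)_t + (g g_{(l)}⁻¹)_{(k−l)} − g g_{(l)}⁻¹ = (q̂_{(−l)} r̃)_{(l)} − (q̂_{(−l)} r̃)_{(k)}
    (heq1 : ∀ t j (a b : Fin m),
      HasDerivAt (fun s => (g s j * (g s (j + k))⁻¹) a b)
        ((g t j * (g t (j + l))⁻¹ - g t (j + (k - l)) * (g t (j + k))⁻¹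
          + qh t j * rr t (j + l) - qh t (j + (k - l)) * rr t (j + k)) a b) t)
    -- q̂_{(k−l)} + q̂ P + g g_{(k)}⁻¹ q̂_{(k)} = 0
    (heq2 : ∀ t j,
      qh t (j + (k - l)) + qh t j * P + g t j * (g t (j + k))⁻¹ * qh t (j + k) = 0)
    -- r̃_{(l−k)} + P r̃ + (r̃ g)_{(−k)} g⁻¹ = 0
    (heq3 : ∀ t j,
      rr t (j + (l - k)) + P * rr t j + (rr t (j - k) * g t (j - k)) * (g t j)⁻¹ = 0) :
    -- (V V_{(1)} ⋯ V_{(k−1)})_t − (V ⋯ V_{(l−1)} − V_{(k−l)} ⋯ V_{(k−1)})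
    --   = q̂ r̃_{(l)} − (q̂ r̃_{(l)})_{(k−l)}
    (∀ t j (a b : Fin m),
      HasDerivAt
        (fun s => ordProd (fun i => g s i * (g s (i + 1))⁻¹) j k.toNat a b)
        ((ordProd (fun i => g t i * (g t (i + 1))⁻¹) j l.toNat
          - ordProd (fun i => g t i * (g t (i + 1))⁻¹) (j + (k - l)) l.toNat
          + qh t j * rr t (j + l) - qh t (j + (k - l)) * rr t (j + k)) a b) t) ∧
    -- q̂_{(k−l)} + q̂ P = −V V_{(1)} ⋯ V_{(k−1)} q̂_{(k)}
    (∀ t j,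
      qh t (j + (k - l)) + qh t j * P
        = -(ordProd (fun i => g t i * (g t (i + 1))⁻¹) j k.toNat * qh t (j + k))) ∧
    -- r̃_{(l)} + P r̃_{(k)} = −r̃ V V_{(1)} ⋯ V_{(k−1)}
    (∀ t j,
      rr t (j + l) + P * rr t (j + k)
        = -(rr t j * ordProd (fun i => g t i * (g t (i + 1))⁻¹) j k.toNat)) := by
  have hkk : (k.toNat : ℤ) = k := Int.toNat_of_nonneg (by omega)
  have hll : (l.toNat : ℤ) = l := Int.toNat_of_nonneg (by omega)
  have htel : ∀ t a nn, ordProd (fun i => g t i * (g t (i + 1))⁻¹) a nn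
      = g t a * (g t (a + nn))⁻¹ := fun t a nn => ordProd_telescope _ (hginv t) a nn
  refine ⟨fun t j a b => ?_, fun t j => ?_, fun t j => ?_⟩
  · have h := heq1 t j a b
    simp only [htel, hkk, hll, show j + (k - l) + l = j + k from by ring]
    exact h
  · have h := heq2 t j
    rw [htel, hkk]
    linear_combination (norm := module) h
  · have h := heq3 t (j + k)
    rw [htel, hkk]
    have e1 : j + k + (l - k) = j + l := by ring
    have e2 : j + k - k = j := by ring
    rw [e1, e2] at h
    rw [← Matrix.mul_assoc]
    linear_combination (norm := module) h
end
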